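/- arXiv:cs/0701179 — 2 statements merged into one kernel-verified Lean document; each statement's English description precedes it below -/
import Mathlib

section
/- By induction on the number of steps: if two robots occupy distinct positions at time t_j and at every subsequent step each robot remains in its own Voronoi cell, then the two robots occupy distinct positions at all times t_{j'} with j' > j. -/
def voronoiCell (P : Set (EuclideanSpace ℝ (Fin 2))) (p : EuclideanSpace ℝ (Fin 2)) :
    Set (EuclideanSpace ℝ (Fin 2)) :=
  {q | ∀ p' ∈ P, p' ≠ p → dist q p < dist q p'}

/-- Closure by induction: if two robots occupy distinct positions at time `j` and each
robot always moves within its current Voronoi cell (computed from all occupied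
positions), then the two robots occupy distinct positions at all later times. -/
theorem scatter_closure {ι : Type*} (pos : ℕ → ι → EuclideanSpace ℝ (Fin 2))
    (hmove : ∀ t (r : ι),
      pos (t + 1) r ∈ voronoiCell (Set.range (pos t)) (pos t r))
    (i i' : ι) (j : ℕ) (hdist : pos j i ≠ pos j i') :
    ∀ j' > j, pos j' i ≠ pos j' i' := by
  have step : ∀ t, pos t i ≠ pos t i' → pos (t + 1) i ≠ pos (t + 1) i' := by
    intro t ht heq
    have h1 := hmove t i (pos t i') ⟨i', rfl⟩ (Ne.symm ht)
    have h2 := hmove t i' (pos t i) ⟨i, rfl⟩ ht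
    rw [heq] at h1
    exact absurd (h1.trans h2) (lt_irrefl _)
  intro j' hj'
  induction j' with
  | zero => omega
  | succ n ih =>
    rcases Nat.lt_or_ge j n with h | h
    · exact step n (ih h)
    · have : n = j := by omega
      exact this ▸ step n (this ▸ hdist)
end

section
/- There exists no deterministic algorithm solving the Scatter Problem: for any deterministic uniform anonymous algorithm A (a function from a robot's view to its next position), if all n ≥ 2 robots start at the same position and all are activated at every step, then all robots remain at the same position forever. -/
/-- Impossibility of deterministic scattering: for any deterministic, uniform and
anonymous algorithm `A` (mapping the multiset of robot positions observed in local
coordinates to a relative destination), if all `n ≥ 2` robots start at the same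
position and all are activated at every step, then all robots remain at the same
position forever. -/
theorem no_deterministic_scatter (n : ℕ) (hn : 2 ≤ n)
    (A : Multiset (EuclideanSpace ℝ (Fin 2)) → EuclideanSpace ℝ (Fin 2))
    (pos : ℕ → Fin n → EuclideanSpace ℝ (Fin 2))
    (hinit : ∀ i i' : Fin n, pos 0 i = pos 0 i')
    (hstep : ∀ t (i : Fin n),
      pos (t + 1) i =
        pos t i + A ((Finset.univ.val : Multiset (Fin n)).map
          (fun j => pos t j - pos t i))) :
    ∀ t (i i' : Fin n), pos t i = pos t i' := by
  intro t
  induction t with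
  | zero => exact hinit
  | succ t ih =>
    intro i i'
    rw [hstep t i, hstep t i']
    have h : pos t i = pos t i' := ih i i'
    rw [h]
end
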